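/- arXiv:1407.0211 — 2 statements merged into one kernel-verified Lean document; each statement's English description precedes it below -/
import Mathlib

section
/- Let $0 < \underline{\sigma}^2 \le \overline{\sigma}^2 = 1$, let $G(a) = \frac{1}{2}(a^+ - \underline{\sigma}^2 a^-)$, let $\alpha = \underline{\sigma}^2/2$, and fix $n \ge 0$, $a \in \mathbb{R}$. Define $v^n(t,x) = (nt+1)^{-\alpha} \exp\left(-\frac{n(x-a)^2}{2(nt+1)}\right)$ for $(t,x) \in (0,\infty) \times \mathbb{R}$. Then $v^n$ is a supersolution of the G-heat equation: $\partial_t v^n(t,x) - G(\partial^2_{xx} v^n(t,x)) \ge 0$ for all $t > 0$ and $x \in \mathbb{R}$. -/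
/-- `σ` stands for `σ̲²`, the lower variance, with `σ̄² = 1`. -/
theorem v_supersolution_of_G_heat
    (σ : ℝ) (hσ : 0 < σ) (hσ1 : σ ≤ 1)
    (G : ℝ → ℝ) (hG : ∀ a : ℝ, G a = (1 / 2) * (1 * max a 0 - σ * max (-a) 0))
    (α : ℝ) (hα : α = σ / 2)
    (n a : ℝ) (hn : 0 ≤ n)
    (v : ℝ → ℝ → ℝ)
    (hv : ∀ t x : ℝ, v t x = (n * t + 1) ^ (-α) * Real.exp (-(n * (x - a) ^ 2) / (2 * (n * t + 1)))) :
    ∀ t > (0 : ℝ), ∀ x : ℝ,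
      deriv (fun τ => v τ x) t - G (deriv (deriv (fun y => v t y)) x) ≥ 0 := by
  intro t ht x
  have hc : (0:ℝ) < n * t + 1 := by nlinarith
  have hc' : (n * t + 1) ≠ 0 := ne_of_gt hc
  have hpow : (n * t + 1) ^ (-α) = (n * t + 1) ^ (-α - 1) * (n * t + 1) := by
    rw [← Real.rpow_add_one hc' (-α - 1)]
    congr 1
    ring
  -- time derivative
  have hfun : (fun τ => v τ x)
      = fun τ => (n * τ + 1) ^ (-α) * Real.exp (-(n * (x - a) ^ 2) / (2 * (n * τ + 1))) :=
    funext fun τ => hv τ x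
  have h1 : HasDerivAt (fun τ : ℝ => n * τ + 1) n t := by
    simpa using ((hasDerivAt_id t).const_mul n).add_const 1
  have h2 : HasDerivAt (fun τ : ℝ => (n * τ + 1) ^ (-α))
      (n * (-α) * (n * t + 1) ^ (-α - 1)) t := h1.rpow_const (Or.inl hc')
  have h3 : HasDerivAt (fun τ : ℝ => 2 * (n * τ + 1)) (2 * n) t := by
    simpa using h1.const_mul 2
  have h4 : HasDerivAt (fun τ : ℝ => -(n * (x - a) ^ 2) / (2 * (n * τ + 1)))
      ((0 * (2 * (n * t + 1)) - (-(n * (x - a) ^ 2)) * (2 * n)) / (2 * (n * t + 1)) ^ 2) t :=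
    (hasDerivAt_const t _).div h3 (by positivity)
  have h5 : HasDerivAt (fun τ : ℝ => (n * τ + 1) ^ (-α) * Real.exp (-(n * (x - a) ^ 2) / (2 * (n * τ + 1)))) _ t :=
    h2.mul h4.exp
  have hdt : deriv (fun τ => v τ x) t
      = n * (n * t + 1) ^ (-α - 1) * Real.exp (-(n * (x - a) ^ 2) / (2 * (n * t + 1)))
        * (n * (x - a) ^ 2 / (n * t + 1) / 2 - α) := by
    rw [hfun, h5.deriv, hpow]
    field_simp
    ring
  -- spatial derivatives
  have hfunx : (fun y => v t y)
      = fun y => (n * t + 1) ^ (-α) * Real.exp (-(n * (y - a) ^ 2) / (2 * (n * t + 1))) :=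
    funext fun y => hv t y
  have hexp : ∀ y : ℝ, HasDerivAt (fun y : ℝ => Real.exp (-(n * (y - a) ^ 2) / (2 * (n * t + 1))))
      (Real.exp (-(n * (y - a) ^ 2) / (2 * (n * t + 1))) * (-(n * (y - a)) / (n * t + 1))) y := by
    intro y
    have h0 : HasDerivAt (fun y : ℝ => (y - a) ^ 2) (2 * (y - a)) y := by
      simpa using ((hasDerivAt_id y).sub_const a).fun_pow 2
    have hy : HasDerivAt (fun y : ℝ => -(n * (y - a) ^ 2) / (2 * (n * t + 1)))
        (-(n * (y - a)) / (n * t + 1)) y := by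
      have : HasDerivAt (fun y : ℝ => -(n * (y - a) ^ 2) / (2 * (n * t + 1))) _ y :=
        ((h0.const_mul n).neg).div_const (2 * (n * t + 1))
      convert this using 1
      field_simp
    exact hy.exp
  have hd1 : deriv (fun y => v t y)
      = fun y => (n * t + 1) ^ (-α)
          * (Real.exp (-(n * (y - a) ^ 2) / (2 * (n * t + 1))) * (-(n * (y - a)) / (n * t + 1))) := by
    rw [hfunx]
    funext y
    exact ((hexp y).const_mul _).deriv
  have hD : HasDerivAt (fun y : ℝ => -(n * (y - a)) / (n * t + 1)) (-(n / (n * t + 1))) x := by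
    have : HasDerivAt (fun y : ℝ => -(n * (y - a)) / (n * t + 1)) _ x :=
      (((hasDerivAt_id x).sub_const a).const_mul n).neg.div_const (n * t + 1)
    convert this using 1
    ring
  have h2x : HasDerivAt (fun y => (n * t + 1) ^ (-α)
      * (Real.exp (-(n * (y - a) ^ 2) / (2 * (n * t + 1))) * (-(n * (y - a)) / (n * t + 1)))) _ x :=
    ((hexp x).mul hD).const_mul ((n * t + 1) ^ (-α))
  have hdxx : deriv (deriv (fun y => v t y)) x
      = n * (n * t + 1) ^ (-α - 1) * Real.exp (-(n * (x - a) ^ 2) / (2 * (n * t + 1)))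
        * (n * (x - a) ^ 2 / (n * t + 1) - 1) := by
    rw [hd1, h2x.deriv, hpow]
    field_simp
    ring
  rw [hdt, hdxx, hG]
  set K := n * (n * t + 1) ^ (-α - 1) * Real.exp (-(n * (x - a) ^ 2) / (2 * (n * t + 1))) with hKdef
  set B := n * (x - a) ^ 2 / (n * t + 1) with hBdef
  have hK : 0 ≤ K := by
    rw [hKdef]; positivity
  have hB : 0 ≤ B := by
    rw [hBdef]; positivity
  have hα2 : α ≤ 1 / 2 := by rw [hα]; linarith
  rcases le_or_gt 1 B with h | h
  · have hu : 0 ≤ K * (B - 1) := mul_nonneg hK (by linarith)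
    rw [max_eq_left hu, max_eq_right (by linarith : -(K * (B - 1)) ≤ 0)]
    nlinarith [mul_nonneg hK (show (0:ℝ) ≤ 1 / 2 - α by linarith)]
  · have hu : K * (B - 1) ≤ 0 := mul_nonpos_of_nonneg_of_nonpos hK (by linarith)
    rw [max_eq_right hu, max_eq_left (by linarith : (0:ℝ) ≤ -(K * (B - 1)))]
    subst hα
    nlinarith [mul_nonneg (mul_nonneg hK hB) (show (0:ℝ) ≤ 1 - σ by linarith)]
end

section
/- Let $W$ be a standard Brownian motion in one dimension. Then almost surely, the path $t \mapsto W_t$ is nowhere locally Hölder continuous of order $\gamma$ on $[0,1]$ for every $\gamma > 1/2$: almost surely there is no $s \in [0,1]$, $\beta > 0$, $\delta > 0$ such that $|W_t - W_s| \le \beta |t-s|^{\gamma}$ for all $t \in [0,1]$ with $|t-s| < \delta$. -/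
open MeasureTheory ProbabilityTheory

/-- A standard one-dimensional Brownian motion on `[0, ∞)` (extended arbitrarily but
continuously to negative times). -/
structure IsStdBM {Ω : Type*} [MeasurableSpace Ω] (P : Measure Ω) (W : ℝ → Ω → ℝ) : Prop where
  isProb : IsProbabilityMeasure P
  meas : ∀ t : ℝ, Measurable (W t)
  init : ∀ ω, W 0 ω = 0
  cont : ∀ ω, Continuous fun t => W t ω
  incr : ∀ s t : ℝ, 0 ≤ s → s ≤ t →
    Measure.map (fun ω => W t ω - W s ω) P = gaussianReal 0 (Real.toNNReal (t - s))
  indep : ∀ (n : ℕ) (ts : ℕ → ℝ), (∀ i, 0 ≤ ts i) → Monotone ts →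
    iIndepFun
      (fun (i : Fin n) ω => W (ts (i + 1)) ω - W (ts i) ω) P

open Real Filter

lemma gauss_interval_bound (n : ℕ) (hn : 1 ≤ n) (ε : ℝ) (hε : 0 ≤ ε) :
    gaussianReal 0 (Real.toNNReal (1/n)) {x : ℝ | |x| ≤ ε}
      ≤ ENNReal.ofReal (ε * Real.sqrt n) := by
  have hnR : (0:ℝ) < n := by exact_mod_cast hn
  have hv : Real.toNNReal (1/n) ≠ 0 := by
    exact (Real.toNNReal_pos.mpr (by positivity)).ne'
  set v : NNReal := Real.toNNReal (1/n) with hvdef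
  have hvR : (v : ℝ) = 1/n := Real.coe_toNNReal _ (by positivity)
  -- pointwise bound on the density
  have hc : (0:ℝ) < Real.sqrt (2 * π * v) := by
    rw [hvR]; positivity
  have hpdf : ∀ x, gaussianPDF 0 v x ≤ ENNReal.ofReal (Real.sqrt (2 * π * v))⁻¹ := by
    intro x
    unfold gaussianPDF gaussianPDFReal
    refine ENNReal.ofReal_le_ofReal ?_
    have : rexp (-(x - 0)^2 / (2*v)) ≤ 1 :=
      Real.exp_le_one_iff.mpr
        (div_nonpos_of_nonpos_of_nonneg (neg_nonpos.mpr (sq_nonneg _)) (by positivity))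
    calc (Real.sqrt (2*π*v))⁻¹ * rexp (-(x-0)^2/(2*v)) ≤ (Real.sqrt (2*π*v))⁻¹ * 1 := by
          apply mul_le_mul_of_nonneg_left this (by positivity)
      _ = _ := mul_one _
  have hset : {x : ℝ | |x| ≤ ε} = Set.Icc (-ε) ε := by ext x; simp [abs_le]
  have hmeas : MeasurableSet {x : ℝ | |x| ≤ ε} := by rw [hset]; exact measurableSet_Icc
  rw [gaussianReal_apply 0 hv]
  calc ∫⁻ x in {x : ℝ | |x| ≤ ε}, gaussianPDF 0 v x
      ≤ ∫⁻ _ in {x : ℝ | |x| ≤ ε}, ENNReal.ofReal (Real.sqrt (2 * π * v))⁻¹ :=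
        lintegral_mono fun x => hpdf x
    _ = ENNReal.ofReal (Real.sqrt (2 * π * v))⁻¹ * volume {x : ℝ | |x| ≤ ε} :=
        setLIntegral_const _ _
    _ = ENNReal.ofReal ((Real.sqrt (2 * π * v))⁻¹ * (2 * ε)) := by
        rw [hset, Real.volume_Icc, show ε - -ε = 2*ε by ring,
          ← ENNReal.ofReal_mul (by positivity)]
    _ ≤ ENNReal.ofReal (ε * Real.sqrt n) := by
        refine ENNReal.ofReal_le_ofReal ?_
        -- key real inequality
        have h1 : (2 / Real.sqrt n) ≤ Real.sqrt (2 * π * v) := by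
          rw [show (2 * π * (v:ℝ)) = 2 * π * (1/n) by rw [hvR]]
          rw [Real.le_sqrt (by positivity)]
          have e1 : (2/Real.sqrt n)^2 = 4/(n:ℝ) := by
            rw [div_pow, Real.sq_sqrt hnR.le]; norm_num
          rw [e1, mul_one_div]
          gcongr
          · linarith [Real.pi_gt_three]
          all_goals positivity
        have h2 : (Real.sqrt (2 * π * v))⁻¹ ≤ Real.sqrt n / 2 := by
          have h3 : (0:ℝ) < 2 / Real.sqrt n := by positivity
          calc (Real.sqrt (2 * π * v))⁻¹ ≤ (2 / Real.sqrt n)⁻¹ :=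
                inv_anti₀ h3 h1
            _ = Real.sqrt n / 2 := by rw [inv_div]
        calc (Real.sqrt (2*π*v))⁻¹ * (2*ε) ≤ (Real.sqrt n / 2) * (2*ε) := by
              apply mul_le_mul_of_nonneg_right h2 (by positivity)
          _ = ε * Real.sqrt n := by ring

lemma indep_prod_bound {Ω : Type*} [MeasurableSpace Ω] {P : Measure Ω} {W : ℝ → Ω → ℝ}
    (hW : IsStdBM P W) (n : ℕ) (hn : 1 ≤ n) (k L : ℕ) (ε : ℝ) (hε : 0 ≤ ε) :
    P {ω | ∀ j < L, |W (((k+j+1 : ℕ) : ℝ)/n) ω - W (((k+j : ℕ) : ℝ)/n) ω| ≤ ε}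
      ≤ (ENNReal.ofReal (ε * Real.sqrt n)) ^ L := by
  have hnR : (0:ℝ) < n := by exact_mod_cast hn
  set ts : ℕ → ℝ := fun i => ((k + i : ℕ) : ℝ) / n with hts
  have hts0 : ∀ i, 0 ≤ ts i := fun i => by positivity
  have htsm : Monotone ts := by
    intro a b hab
    have h1 : ((k+a:ℕ):ℝ) ≤ ((k+b:ℕ):ℝ) := by exact_mod_cast Nat.add_le_add_left hab k
    simp only [hts]
    gcongr
  have hInd := hW.indep L ts hts0 htsm
  set S : Set ℝ := {x : ℝ | |x| ≤ ε} with hS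
  have hSm : MeasurableSet S := by
    have : S = Set.Icc (-ε) ε := by ext x; simp [hS, abs_le]
    rw [this]; exact measurableSet_Icc
  set f : Fin L → Ω → ℝ := fun i ω => W (ts (i + 1)) ω - W (ts i) ω with hf
  have hkey := hInd.measure_inter_preimage_eq_mul (S := Finset.univ)
    (sets := fun _ => S) (fun i _ => hSm)
  have hsetEq : {ω | ∀ j < L, |W (((k+j+1 : ℕ) : ℝ)/n) ω - W (((k+j : ℕ) : ℝ)/n) ω| ≤ ε}
      = ⋂ i ∈ Finset.univ, f i ⁻¹' S := by
    ext ω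
    simp only [Set.mem_setOf_eq, Finset.mem_univ, Set.iInter_true, Set.mem_iInter,
      Set.mem_preimage, hf, hS]
    constructor
    · intro h i
      exact h i i.2
    · intro h j hj
      exact h ⟨j, hj⟩
  rw [hsetEq, hkey]
  have hfac : ∀ i : Fin L, P (f i ⁻¹' S) ≤ ENNReal.ofReal (ε * Real.sqrt n) := by
    intro i
    have hmble : Measurable (f i) := (hW.meas _).sub (hW.meas _)
    have hmap : P (f i ⁻¹' S) = (Measure.map (f i) P) S := by
      rw [Measure.map_apply hmble hSm]
    rw [hmap, hf]
    have hle : ts i ≤ ts (i+1) := htsm (Nat.le_succ _)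
    rw [hW.incr (ts i) (ts (i+1)) (hts0 _) hle]
    have hdiff : ts (↑i + 1) - ts ↑i = 1/n := by
      simp only [hts]
      push_cast
      field_simp
      ring
    rw [hdiff]
    exact gauss_interval_bound n hn ε hε
  calc ∏ i : Fin L, P (f i ⁻¹' S) ≤ ∏ _i : Fin L, ENNReal.ofReal (ε * Real.sqrt n) :=
        Finset.prod_le_prod' fun i _ => hfac i
    _ = (ENNReal.ofReal (ε * Real.sqrt n)) ^ L := by
        rw [Finset.prod_const, Finset.card_univ, Fintype.card_fin]


lemma cover_lemma (n l : ℕ) (hln : l ≤ n) (hn : 1 ≤ n) (s : ℝ) (hs0 : 0 ≤ s) (hs1 : s ≤ 1) :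
    ∃ k : ℕ, k + l ≤ n ∧ ∀ j ≤ l, |((k + j : ℕ) : ℝ)/n - s| ≤ ((l:ℝ)+1)/n := by
  have hnR : (0:ℝ) < n := by exact_mod_cast hn
  refine ⟨min (⌈(n:ℝ) * s⌉₊) (n - l), by omega, ?_⟩
  intro j hj
  set k := min (⌈(n:ℝ) * s⌉₊) (n - l) with hk
  have habs : ∀ x : ℝ, |x - (n:ℝ)*s| ≤ (l:ℝ)+1 → |x/n - s| ≤ ((l:ℝ)+1)/n := by
    intro x hx
    have : x/(n:ℝ) - s = (x - (n:ℝ)*s)/n := by field_simp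
    rw [this, abs_div, abs_of_pos hnR]
    gcongr
  apply habs
  have hjR : (j:ℝ) ≤ l := by exact_mod_cast hj
  rcases le_or_gt (⌈(n:ℝ) * s⌉₊) (n - l) with hc | hc
  · have hkv : k = ⌈(n:ℝ) * s⌉₊ := min_eq_left hc
    have h1 : (n:ℝ)*s ≤ (k:ℝ) := by rw [hkv]; exact Nat.le_ceil _
    have h2 : (k:ℝ) < (n:ℝ)*s + 1 := by
      rw [hkv]; exact Nat.ceil_lt_add_one (by positivity)
    rw [abs_le]
    push_cast
    constructor <;> linarith
  · have hkv : k = n - l := min_eq_right hc.le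
    have hkR : (k:ℝ) = (n:ℝ) - l := by rw [hkv]; push_cast [hln]; ring
    have h1 : (n:ℝ) - l < (n:ℝ)*s := by
      have : ((n - l : ℕ):ℝ) + 1 ≤ (⌈(n:ℝ)*s⌉₊ : ℝ) := by exact_mod_cast hc
      have h2 : (⌈(n:ℝ)*s⌉₊ : ℝ) < (n:ℝ)*s + 1 := Nat.ceil_lt_add_one (by positivity)
      push_cast [hln] at this
      linarith
    have h2 : (n:ℝ)*s ≤ n := by nlinarith
    rw [abs_le]
    push_cast
    rw [hkR]
    constructor <;> linarith


lemma bound_tendsto (C q : ℝ) (hq : q < -1) :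
    Filter.Tendsto (fun n : ℕ => C * (((n:ℝ)+1) * (n:ℝ) ^ q)) Filter.atTop (nhds 0) := by
  have h1 : Filter.Tendsto (fun n : ℕ => (n:ℝ) ^ (q+1) + (n:ℝ) ^ q) atTop (nhds 0) := by
    have ha : Tendsto (fun x:ℝ => x ^ (q+1)) atTop (nhds 0) := by
      have := tendsto_rpow_neg_atTop (y := -(q+1)) (by linarith)
      simpa using this
    have hb : Tendsto (fun x:ℝ => x ^ q) atTop (nhds 0) := by
      have := tendsto_rpow_neg_atTop (y := -q) (by linarith)
      simpa using this
    have := (ha.comp tendsto_natCast_atTop_atTop).add (hb.comp tendsto_natCast_atTop_atTop)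
    simpa using this
  have h2 := h1.const_mul C
  rw [mul_zero] at h2
  apply h2.congr'
  filter_upwards [Filter.eventually_ge_atTop 1] with n hn
  have hnR : (0:ℝ) < n := by exact_mod_cast hn
  have he : (n:ℝ) ^ (q+1) = (n:ℝ)^q * n := by
    rw [Real.rpow_add hnR, Real.rpow_one]
  rw [he]; ring

lemma holder_event_null {Ω : Type*} [MeasurableSpace Ω] {P : Measure Ω} {W : ℝ → Ω → ℝ}
    (hW : IsStdBM P W) (γ β δ : ℝ) (hγ : 1/2 < γ) (hβ : 0 < β) (hδ : 0 < δ) :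
    P {ω | ∃ s ∈ Set.Icc (0:ℝ) 1, ∀ t ∈ Set.Icc (0:ℝ) 1, |t - s| < δ →
        |W t ω - W s ω| ≤ β * |t - s| ^ γ} = 0 := by
  have hγpos : (0:ℝ) < γ - 1/2 := by linarith
  obtain ⟨l, hlgt⟩ := exists_nat_gt (1/(γ - 1/2))
  have hl1 : 1 ≤ l := by
    by_contra h
    push_neg at h
    interval_cases l
    · simp at hlgt
      nlinarith
  have hlq : 1 < (γ - 1/2) * l := by
    have := (div_lt_iff₀ hγpos).mp (by rwa [div_lt_iff₀ hγpos] at hlgt; )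
    nlinarith [hlgt, hγpos]
  set E := {ω | ∃ s ∈ Set.Icc (0:ℝ) 1, ∀ t ∈ Set.Icc (0:ℝ) 1, |t - s| < δ →
        |W t ω - W s ω| ≤ β * |t - s| ^ γ} with hE
  set ε : ℕ → ℝ := fun n => 2*β*(((l:ℝ)+1)/n)^γ with hε
  -- step 1 : covering bound for suitable n
  have key : ∀ n : ℕ, l ≤ n → ((l:ℝ)+1)/n < δ →
      P E ≤ (↑(n+1) : ENNReal) * (ENNReal.ofReal (ε n * Real.sqrt n)) ^ l := by
    intro n hln hδn
    have hn1 : 1 ≤ n := le_trans hl1 hln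
    have hnR : (0:ℝ) < n := by exact_mod_cast hn1
    have hεn : 0 ≤ ε n := by positivity
    set Bs : ℕ → Set Ω := fun k =>
      {ω | ∀ j < l, |W (((k+j+1 : ℕ) : ℝ)/n) ω - W (((k+j : ℕ) : ℝ)/n) ω| ≤ ε n} with hBs
    have hsub : E ⊆ ⋃ k ∈ Finset.range (n+1), Bs k := by
      intro ω hω
      obtain ⟨s, hs, hH⟩ := hω
      obtain ⟨k, hkl, hcov⟩ := cover_lemma n l hln hn1 s hs.1 hs.2
      refine Set.mem_biUnion (show k ∈ Finset.range (n+1) from Finset.mem_range.mpr (by omega)) ?_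
      intro j hj
      have hmem : ∀ m : ℕ, m ≤ l → ((k+m : ℕ):ℝ)/n ∈ Set.Icc (0:ℝ) 1 := by
        intro m hm
        constructor
        · positivity
        · rw [div_le_one hnR]
          exact_mod_cast (by omega : k + m ≤ n)
      have hb : ∀ m : ℕ, m ≤ l → |W (((k+m : ℕ):ℝ)/n) ω - W s ω| ≤ β * (((l:ℝ)+1)/n)^γ := by
        intro m hm
        have hd := hcov m hm
        calc |W (((k+m : ℕ):ℝ)/n) ω - W s ω| ≤ β * |((k+m : ℕ):ℝ)/n - s| ^ γ :=
              hH _ (hmem m hm) (lt_of_le_of_lt hd hδn)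
          _ ≤ β * (((l:ℝ)+1)/n)^γ := by
              apply mul_le_mul_of_nonneg_left _ hβ.le
              exact Real.rpow_le_rpow (abs_nonneg _) hd (by linarith)
      have e1 : ((k+j+1 : ℕ):ℝ) = ((k+(j+1) : ℕ):ℝ) := by norm_cast
      calc |W (((k+j+1 : ℕ):ℝ)/n) ω - W (((k+j : ℕ):ℝ)/n) ω|
          ≤ |W (((k+j+1 : ℕ):ℝ)/n) ω - W s ω| + |W s ω - W (((k+j : ℕ):ℝ)/n) ω| :=
            abs_sub_le _ _ _
        _ = |W (((k+j+1 : ℕ):ℝ)/n) ω - W s ω| + |W (((k+j : ℕ):ℝ)/n) ω - W s ω| := by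
            rw [abs_sub_comm (W s ω)]
        _ ≤ β * (((l:ℝ)+1)/n)^γ + β * (((l:ℝ)+1)/n)^γ := by
            apply add_le_add
            · rw [e1]; exact hb (j+1) (by omega)
            · exact hb j hj.le
        _ = ε n := by rw [hε]; ring
    calc P E ≤ P (⋃ k ∈ Finset.range (n+1), Bs k) := measure_mono hsub
      _ ≤ ∑ k ∈ Finset.range (n+1), P (Bs k) := measure_biUnion_finset_le _ _
      _ ≤ ∑ _k ∈ Finset.range (n+1), (ENNReal.ofReal (ε n * Real.sqrt n)) ^ l :=
          Finset.sum_le_sum fun k _ => indep_prod_bound hW n hn1 k l (ε n) hεn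
      _ = (↑(n+1) : ENNReal) * (ENNReal.ofReal (ε n * Real.sqrt n)) ^ l := by
          rw [Finset.sum_const, Finset.card_range, nsmul_eq_mul]
  -- step 2 : the bound as an explicit real sequence
  set q : ℝ := (1/2 - γ) * l with hqdef
  have hq : q < -1 := by
    rw [hqdef]
    nlinarith [hlq]
  set C : ℝ := (2*β*((l:ℝ)+1)^γ)^l with hC
  have hbound_eq : ∀ n : ℕ, 1 ≤ n →
      (↑(n+1) : ENNReal) * (ENNReal.ofReal (ε n * Real.sqrt n)) ^ l
        = ENNReal.ofReal (C * (((n:ℝ)+1) * (n:ℝ) ^ q)) := by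
    intro n hn1
    have hnR : (0:ℝ) < n := by exact_mod_cast hn1
    have hεs : ε n * Real.sqrt n = 2*β*((l:ℝ)+1)^γ * (n:ℝ) ^ ((1:ℝ)/2 - γ) := by
      simp only [hε]
      rw [Real.div_rpow (by positivity) hnR.le, Real.sqrt_eq_rpow,
        Real.rpow_sub hnR]
      field_simp
    have hpow : (ε n * Real.sqrt n)^l = C * (n:ℝ) ^ q := by
      rw [hεs, mul_pow, ← hC, hqdef]
      congr 1
      rw [← Real.rpow_natCast ((n:ℝ) ^ ((1:ℝ)/2 - γ)) l, ← Real.rpow_mul hnR.le]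
    rw [← ENNReal.ofReal_natCast (n+1), ← ENNReal.ofReal_pow (by positivity),
      ← ENNReal.ofReal_mul (by positivity), hpow]
    congr 1
    push_cast
    ring
  -- step 3 : conclude via the limit
  have hT : Filter.Tendsto (fun n : ℕ => ENNReal.ofReal (C * (((n:ℝ)+1) * (n:ℝ) ^ q)))
      Filter.atTop (nhds 0) := by
    have := ENNReal.tendsto_ofReal (bound_tendsto C q hq)
    simpa using this
  have hev : ∀ᶠ n : ℕ in Filter.atTop,
      P E ≤ ENNReal.ofReal (C * (((n:ℝ)+1) * (n:ℝ) ^ q)) := by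
    filter_upwards [Filter.eventually_ge_atTop (max l (⌈((l:ℝ)+1)/δ⌉₊ + 1))] with n hn
    have hln : l ≤ n := le_trans (le_max_left _ _) hn
    have hn1 : 1 ≤ n := le_trans hl1 hln
    have hnR : (0:ℝ) < n := by exact_mod_cast hn1
    have hnsmall : ((l:ℝ)+1)/n < δ := by
      have h1 : (⌈((l:ℝ)+1)/δ⌉₊ + 1 : ℕ) ≤ n := le_trans (le_max_right _ _) hn
      have h2 : ((l:ℝ)+1)/δ < n := by
        calc ((l:ℝ)+1)/δ ≤ (⌈((l:ℝ)+1)/δ⌉₊ : ℝ) := Nat.le_ceil _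
          _ < (⌈((l:ℝ)+1)/δ⌉₊ : ℝ) + 1 := by linarith
          _ ≤ n := by exact_mod_cast h1
      rw [div_lt_iff₀ hnR]
      rw [div_lt_iff₀ hδ] at h2
      linarith
    rw [← hbound_eq n hn1]
    exact key n hln hnsmall
  have : P E ≤ 0 := ge_of_tendsto hT hev
  exact le_antisymm this zero_le

theorem bm_nowhere_holder
    {Ω : Type*} [MeasurableSpace Ω] (P : Measure Ω) (W : ℝ → Ω → ℝ)
    (hW : IsStdBM P W) :
    P {ω | ∃ γ : ℝ, 1 / 2 < γ ∧ ∃ s ∈ Set.Icc (0 : ℝ) 1, ∃ β > (0 : ℝ), ∃ δ > (0 : ℝ),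
        ∀ t ∈ Set.Icc (0 : ℝ) 1, |t - s| < δ → |W t ω - W s ω| ≤ β * |t - s| ^ γ} = 0 := by
  set Em : ℕ → ℕ → ℕ → Set Ω := fun m b j =>
    {ω | ∃ s ∈ Set.Icc (0:ℝ) 1, ∀ t ∈ Set.Icc (0:ℝ) 1, |t - s| < 1/((j:ℝ)+1) →
      |W t ω - W s ω| ≤ ((b:ℝ)+1) * |t - s| ^ (1/2 + 1/((m:ℝ)+1))} with hEm
  have hsub : {ω | ∃ γ : ℝ, 1 / 2 < γ ∧ ∃ s ∈ Set.Icc (0 : ℝ) 1, ∃ β > (0 : ℝ), ∃ δ > (0 : ℝ),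
      ∀ t ∈ Set.Icc (0 : ℝ) 1, |t - s| < δ → |W t ω - W s ω| ≤ β * |t - s| ^ γ}
      ⊆ ⋃ (m : ℕ) (b : ℕ) (j : ℕ), Em m b j := by
    intro ω hω
    obtain ⟨γ, hγ, s, hs, β, hβ, δ, hδ, hH⟩ := hω
    have hγpos : (0:ℝ) < γ - 1/2 := by linarith
    obtain ⟨m, hm⟩ := exists_nat_gt (1/(γ - 1/2))
    set b := ⌈β⌉₊ with hb
    set j := ⌈1/δ⌉₊ with hj
    have hγ' : 1/2 + 1/((m:ℝ)+1) ≤ γ := by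
      have h0 : (0:ℝ) < 1/(γ - 1/2) := by positivity
      have h1 : 1/((m:ℝ)+1) < 1/(1/(γ - 1/2)) :=
        one_div_lt_one_div_of_lt h0 (by linarith)
      rw [one_div_one_div] at h1
      linarith
    have hβb : β ≤ (b:ℝ)+1 := le_trans (Nat.le_ceil _) (by linarith)
    have hjδ : 1/((j:ℝ)+1) ≤ δ := by
      have h0 : (0:ℝ) < 1/δ := by positivity
      have h1 : 1/((j:ℝ)+1) ≤ 1/(1/δ) :=
        one_div_le_one_div_of_le h0 (le_trans (Nat.le_ceil _) (by linarith))
      rwa [one_div_one_div] at h1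
    have hj1 : 1/((j:ℝ)+1) ≤ 1 := by
      rw [div_le_one (by positivity)]
      have : (0:ℝ) ≤ j := Nat.cast_nonneg _
      linarith
    refine Set.mem_iUnion.mpr ⟨m, Set.mem_iUnion.mpr ⟨b, Set.mem_iUnion.mpr ⟨j, ?_⟩⟩⟩
    refine ⟨s, hs, fun t ht hts => ?_⟩
    have hts' : |t - s| < δ := lt_of_lt_of_le hts hjδ
    have hts1 : |t - s| ≤ 1 := le_of_lt (lt_of_lt_of_le hts hj1)
    have hexp : |t - s| ^ γ ≤ |t - s| ^ (1/2 + 1/((m:ℝ)+1)) := by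
      rcases eq_or_lt_of_le (abs_nonneg (t - s)) with h0 | h0
      · rw [← h0, Real.zero_rpow (by linarith), Real.zero_rpow (by positivity)]
      · exact Real.rpow_le_rpow_of_exponent_ge h0 hts1 hγ'
    calc |W t ω - W s ω| ≤ β * |t - s| ^ γ := hH t ht hts'
      _ ≤ ((b:ℝ)+1) * |t - s| ^ γ :=
          mul_le_mul_of_nonneg_right hβb (Real.rpow_nonneg (abs_nonneg _) _)
      _ ≤ ((b:ℝ)+1) * |t - s| ^ (1/2 + 1/((m:ℝ)+1)) :=
          mul_le_mul_of_nonneg_left hexp (by positivity)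
  apply measure_mono_null hsub
  refine measure_iUnion_null fun m => measure_iUnion_null fun b => measure_iUnion_null fun j => ?_
  exact holder_event_null hW (1/2 + 1/((m:ℝ)+1)) ((b:ℝ)+1) (1/((j:ℝ)+1))
    (lt_add_of_pos_right _ (by positivity)) (by positivity) (by positivity)
end
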